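/- arXiv:2002.07441 — 4 statements merged into one kernel-verified Lean document; each statement's English description precedes it below -/
import Mathlib

section
/- Let L: ℝ^p → ℝ be differentiable and convex, and let β̂ minimize β ↦ L(β) + λ‖β‖₁. Let β* ∈ ℝ^p, δ = β̂ - β*, and S = {j : β*_j ≠ 0}. Then L(β̂) - L(β*) ≤ λ(‖δ_S‖₁ - ‖δ_{S^c}‖₁), where δ_S and δ_{S^c} denote the restrictions of δ to S and its complement. -/
open Finset

/- The ℓ₁ part of the basic inequality: on the support `S` of `y` the reverse triangle
inequality gives `|y j| - |x j| ≤ |x j - y j|`, while off `S` the term is exactly `-|x j - y j|`. -/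
theorem sum_abs_sub_sum_abs_le_sum_support_sub_sum_compl {ι α : Type*} [Fintype ι]
    [AddCommGroup α] [LinearOrder α] [IsOrderedAddMonoid α] (x y : ι → α) :
    ∑ j, |y j| - ∑ j, |x j| ≤
      (∑ j ∈ univ.filter (fun j => y j ≠ 0), |x j - y j|) -
        ∑ j ∈ univ.filter (fun j => y j = 0), |x j - y j| := by
  calc ∑ j, |y j| - ∑ j, |x j| = ∑ j, (|y j| - |x j|) := (sum_sub_distrib _ _).symm
    _ ≤ ∑ j, if y j ≠ 0 then |x j - y j| else -|x j - y j| := by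
      refine sum_le_sum fun j _ => ?_
      split_ifs with hy
      · exact abs_sub_comm (x j) (y j) ▸ abs_sub_abs_le_abs_sub (y j) (x j)
      · simp [not_not.mp hy]
    _ = _ := by simp only [sum_ite, sum_neg_distrib, not_not, sub_eq_add_neg]

theorem lasso_basic_inequality_general {p : ℕ} (L : (Fin p → ℝ) → ℝ)
    (lam : ℝ) (hlam : 0 < lam) (βhat βstar : Fin p → ℝ)
    (hmin : ∀ β : Fin p → ℝ,
      L βhat + lam * ∑ j, |βhat j| ≤ L β + lam * ∑ j, |β j|) :
    L βhat - L βstar ≤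
      lam * ((∑ j ∈ Finset.univ.filter (fun j => βstar j ≠ 0), |βhat j - βstar j|) -
        ∑ j ∈ Finset.univ.filter (fun j => βstar j = 0), |βhat j - βstar j|) :=
  calc L βhat - L βstar ≤ lam * (∑ j, |βstar j| - ∑ j, |βhat j|) := by
        linarith [hmin βstar]
    _ ≤ _ := mul_le_mul_of_nonneg_left
        (sum_abs_sub_sum_abs_le_sum_support_sub_sum_compl βhat βstar) hlam.le

/-- Let `L : ℝ^p → ℝ` be differentiable and convex, and let `β̂` minimize
`β ↦ L(β) + λ‖β‖₁`. Let `β* ∈ ℝ^p`, `δ = β̂ - β*`, and `S = {j : β*_j ≠ 0}`.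
Then `L(β̂) - L(β*) ≤ λ(‖δ_S‖₁ - ‖δ_{S^c}‖₁)`. -/
theorem lasso_basic_inequality {p : ℕ} (L : (Fin p → ℝ) → ℝ)
    (hdiff : Differentiable ℝ L) (hconv : ConvexOn ℝ Set.univ L)
    (lam : ℝ) (hlam : 0 < lam) (βhat βstar : Fin p → ℝ)
    (hmin : ∀ β : Fin p → ℝ,
      L βhat + lam * ∑ j, |βhat j| ≤ L β + lam * ∑ j, |β j|) :
    L βhat - L βstar ≤
      lam * ((∑ j ∈ Finset.univ.filter (fun j => βstar j ≠ 0), |βhat j - βstar j|) -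
        ∑ j ∈ Finset.univ.filter (fun j => βstar j = 0), |βhat j - βstar j|) :=
  lasso_basic_inequality_general L lam hlam βhat βstar hmin
end

section
/- Let α ∈ (0,1) and p ≥ 1 with p/α > 8, and let t = Φ⁻¹(1 - α/(2p)) be the (1-α/(2p))-quantile of the standard normal distribution. Then log(p/α) < t² < 2·log(2p/α). -/
/-!
Write `Q t = ∫_{t}^{∞} φ` for the Gaussian tail, so that `Q t = α / (2p) < 1/16`. Both Mills
bounds come from integrating an exact derivative: `x φ(x) = -φ'(x)` gives `Q t ≤ φ(t) / t`, and
`(x / (1 + x²) · φ(x))' = (2 / (1 + x²)² - 1) φ(x) ≥ -φ(x)` gives `t / (1 + t²) · φ(t) ≤ Q t`.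
The lower Mills bound at `29/20` exceeds `1/16`, so `t ≥ 29/20`. For such `t` the upper Mills
bound gives `Q t < exp (-t²/2)`, which is the upper estimate for `t²`, while the lower Mills bound
together with `exp x ≥ 1 + x + x²/2 + x³/6` at `x = t²/2` gives `exp (-t²) < 2 Q t`, which is the
lower estimate.
-/

open MeasureTheory

/-- Density of the standard normal distribution. -/
noncomputable def stdNormalPDF (x : ℝ) : ℝ :=
  (Real.sqrt (2 * Real.pi))⁻¹ * Real.exp (-x ^ 2 / 2)

/-- Cumulative distribution function of the standard normal distribution. -/
noncomputable def stdNormalCDF (a : ℝ) : ℝ :=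
  ∫ x in Set.Iic a, stdNormalPDF x

open Set Real Filter Topology ProbabilityTheory

lemma stdNormalPDF_eq_gaussianPDFReal : stdNormalPDF = gaussianPDFReal 0 1 := by
  ext x
  simp [stdNormalPDF, gaussianPDFReal]

lemma stdNormalPDF_pos (x : ℝ) : 0 < stdNormalPDF x := by
  rw [stdNormalPDF_eq_gaussianPDFReal]; exact gaussianPDFReal_pos _ _ _ one_ne_zero

lemma integrable_stdNormalPDF : Integrable stdNormalPDF := by
  rw [stdNormalPDF_eq_gaussianPDFReal]; exact integrable_gaussianPDFReal _ _

lemma integral_stdNormalPDF : ∫ x, stdNormalPDF x = 1 := by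
  rw [stdNormalPDF_eq_gaussianPDFReal]; exact integral_gaussianPDFReal_eq_one _ one_ne_zero

@[fun_prop]
lemma continuous_stdNormalPDF : Continuous stdNormalPDF := by
  unfold stdNormalPDF; fun_prop

lemma hasDerivAt_stdNormalPDF (x : ℝ) : HasDerivAt stdNormalPDF (-(x * stdNormalPDF x)) x := by
  have h : HasDerivAt (fun y : ℝ => -y ^ 2 / 2) (-x) x :=
    ((hasDerivAt_pow 2 x).fun_neg.div_const 2).congr_deriv (by norm_num; ring)
  refine (h.exp.const_mul (√(2 * π))⁻¹).congr_deriv ?_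
  simp only [stdNormalPDF]; ring

lemma tendsto_stdNormalPDF_atTop : Tendsto stdNormalPDF atTop (𝓝 0) := by
  have h : Tendsto (fun x : ℝ => -x ^ 2 / 2) atTop atBot :=
    (tendsto_neg_atTop_atBot.comp (tendsto_pow_atTop two_ne_zero)).atBot_div_const two_pos
  have := (tendsto_exp_atBot.comp h).const_mul (√(2 * π))⁻¹
  rwa [mul_zero] at this

lemma integrable_mul_stdNormalPDF : Integrable fun x => x * stdNormalPDF x := by
  refine ((integrable_mul_exp_neg_mul_sq (by norm_num : (0:ℝ) < 1/2)).const_mul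
    (√(2 * π))⁻¹).congr (ae_of_all _ fun x => ?_)
  simp only [stdNormalPDF]; ring_nf

noncomputable def stdNormalTail (t : ℝ) : ℝ := ∫ x in Ioi t, stdNormalPDF x

lemma stdNormalCDF_add_stdNormalTail (t : ℝ) : stdNormalCDF t + stdNormalTail t = 1 := by
  rw [stdNormalCDF, stdNormalTail, intervalIntegral.integral_Iic_add_Ioi
    integrable_stdNormalPDF.integrableOn integrable_stdNormalPDF.integrableOn,
    integral_stdNormalPDF]

lemma stdNormalTail_antitone : Antitone stdNormalTail := fun _ _ hst =>
  setIntegral_mono_set integrable_stdNormalPDF.integrableOn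
    (ae_of_all _ fun x => (stdNormalPDF_pos x).le) (Ioi_subset_Ioi hst).eventuallyLE

lemma setIntegral_Ioi_mul_stdNormalPDF (t : ℝ) :
    ∫ x in Ioi t, x * stdNormalPDF x = stdNormalPDF t := by
  have h := integral_Ioi_of_hasDerivAt_of_tendsto' (a := t) (f := fun x => -stdNormalPDF x)
    (fun x _ => by simpa using (hasDerivAt_stdNormalPDF x).fun_neg)
    integrable_mul_stdNormalPDF.integrableOn (by simpa using tendsto_stdNormalPDF_atTop.neg)
  simpa using h

lemma stdNormalTail_le_stdNormalPDF_div {t : ℝ} (ht : 0 < t) :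
    stdNormalTail t ≤ stdNormalPDF t / t := by
  have h : stdNormalTail t ≤ ∫ x in Ioi t, x * stdNormalPDF x / t :=
    setIntegral_mono_on integrable_stdNormalPDF.integrableOn
      (integrable_mul_stdNormalPDF.div_const t).integrableOn measurableSet_Ioi fun x hx => by
        rw [le_div_iff₀ ht]
        nlinarith [stdNormalPDF_pos x, hx.out]
  rwa [integral_div, setIntegral_Ioi_mul_stdNormalPDF] at h

lemma hasDerivAt_div_one_add_sq_mul_stdNormalPDF (x : ℝ) :
    HasDerivAt (fun y => y / (1 + y ^ 2) * stdNormalPDF y)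
      ((2 / (1 + x ^ 2) ^ 2 - 1) * stdNormalPDF x) x := by
  have hx : 1 + x ^ 2 ≠ 0 := by positivity
  have h : HasDerivAt (fun y : ℝ => 1 + y ^ 2) (2 * x) x := by
    simpa using (hasDerivAt_pow 2 x).const_add 1
  refine (((hasDerivAt_id x).fun_div h hx).fun_mul (hasDerivAt_stdNormalPDF x)).congr_deriv ?_
  field_simp
  simp only [id]
  ring

lemma mul_stdNormalPDF_le_stdNormalTail (t : ℝ) :
    t / (1 + t ^ 2) * stdNormalPDF t ≤ stdNormalTail t := by
  have hcoef (x : ℝ) : |2 / (1 + x ^ 2) ^ 2 - 1| ≤ 1 := by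
    have h0 : 0 ≤ 2 / (1 + x ^ 2) ^ 2 := by positivity
    have h2 : 2 / (1 + x ^ 2) ^ 2 ≤ 2 :=
      div_le_self zero_le_two (one_le_pow₀ (by nlinarith [sq_nonneg x]))
    rw [abs_le]; constructor <;> linarith
  have hint : Integrable fun x => (2 / (1 + x ^ 2) ^ 2 - 1) * stdNormalPDF x := by
    refine integrable_stdNormalPDF.mono'
      (Continuous.aestronglyMeasurable (by fun_prop (disch := intro x; positivity)))
      (ae_of_all _ fun x => ?_)
    rw [norm_mul, Real.norm_of_nonneg (stdNormalPDF_pos x).le]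
    exact mul_le_of_le_one_left (stdNormalPDF_pos x).le (hcoef x)
  have hlim : Tendsto (fun y => y / (1 + y ^ 2) * stdNormalPDF y) atTop (𝓝 0) := by
    refine isBoundedUnder_le_mul_tendsto_zero (isBoundedUnder_of ⟨1, fun y => ?_⟩)
      tendsto_stdNormalPDF_atTop
    rw [Function.comp_apply, norm_div, Real.norm_of_nonneg (by positivity : (0 : ℝ) ≤ 1 + y ^ 2),
      div_le_one (by positivity), Real.norm_eq_abs]
    nlinarith [sq_abs y, sq_nonneg (|y| - 1)]
  have h := integral_Ioi_of_hasDerivAt_of_tendsto' (a := t)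
    (fun x _ => hasDerivAt_div_one_add_sq_mul_stdNormalPDF x) hint.integrableOn hlim
  have hle : ∫ x in Ioi t, -((2 / (1 + x ^ 2) ^ 2 - 1) * stdNormalPDF x) ≤ stdNormalTail t :=
    setIntegral_mono_on hint.integrableOn.neg integrable_stdNormalPDF.integrableOn
      measurableSet_Ioi fun x _ => by
        have := (abs_le.mp (hcoef x)).1
        nlinarith [stdNormalPDF_pos x]
  rw [integral_neg, h] at hle
  linarith

lemma one_lt_sqrt_two_mul_pi : 1 < √(2 * π) := by
  rw [lt_sqrt zero_le_one]; linarith [pi_gt_three]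

lemma sqrt_two_mul_pi_lt : √(2 * π) < 2.51 := by
  rw [sqrt_lt' (by norm_num)]; linarith [pi_lt_d2]

lemma one_div_sixteen_lt_stdNormalTail : 1 / 16 < stdNormalTail (29 / 20) := by
  have hexp : exp (841 / 800) < 2.87 := by
    have h1 : 759 / 800 ≤ exp (-(41 / 800)) := by linarith [add_one_le_exp (-(41 / 800) : ℝ)]
    have h2 : exp (841 / 800) * exp (-(41 / 800)) = exp 1 := by rw [← exp_add]; norm_num
    nlinarith [exp_one_lt_d9, exp_pos (841 / 800)]
  have hpdf : stdNormalPDF (29 / 20) = (√(2 * π) * exp (841 / 800))⁻¹ := by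
    rw [stdNormalPDF, mul_inv, ← exp_neg]; norm_num
  calc (1 : ℝ) / 16 < 29 / 20 / (1 + (29 / 20) ^ 2) * (2.51 * 2.87)⁻¹ := by norm_num
    _ ≤ 29 / 20 / (1 + (29 / 20) ^ 2) * stdNormalPDF (29 / 20) := by
      rw [hpdf]; gcongr
      · exact sqrt_two_mul_pi_lt.le
    _ ≤ stdNormalTail (29 / 20) := mul_stdNormalPDF_le_stdNormalTail _

lemma le_of_stdNormalTail_le {t : ℝ} (ht : stdNormalTail t ≤ 1 / 16) : 29 / 20 ≤ t := by
  by_contra! h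
  linarith [stdNormalTail_antitone h.le, one_div_sixteen_lt_stdNormalTail]

lemma stdNormalTail_lt_exp {t : ℝ} (ht : 1 ≤ t) : stdNormalTail t < exp (-t ^ 2 / 2) :=
  calc stdNormalTail t ≤ stdNormalPDF t / t := stdNormalTail_le_stdNormalPDF_div (by linarith)
    _ ≤ stdNormalPDF t := div_le_self (stdNormalPDF_pos t).le ht
    _ < exp (-t ^ 2 / 2) :=
      mul_lt_of_lt_one_left (exp_pos _) (inv_lt_one_of_one_lt₀ one_lt_sqrt_two_mul_pi)

lemma sqrt_two_mul_pi_mul_lt {t : ℝ} (ht : 29 / 20 ≤ t) :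
    √(2 * π) * (1 + t ^ 2) < 2 * t * exp (t ^ 2 / 2) := by
  have hexp : 1 + t ^ 2 / 2 + (t ^ 2 / 2) ^ 2 / 2 + (t ^ 2 / 2) ^ 3 / 6 ≤ exp (t ^ 2 / 2) := by
    have h := sum_le_exp_of_nonneg (by positivity : 0 ≤ t ^ 2 / 2) 4
    norm_num [Finset.sum_range_succ, Nat.factorial] at h
    linarith
  have ht0 : 0 ≤ t := by linarith
  calc √(2 * π) * (1 + t ^ 2) < 2.51 * (1 + t ^ 2) := by gcongr; exact sqrt_two_mul_pi_lt
    _ < 2 * t * (1 + t ^ 2 / 2 + (t ^ 2 / 2) ^ 2 / 2 + (t ^ 2 / 2) ^ 3 / 6) := by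
      nlinarith [mul_nonneg (sub_nonneg.2 ht) (sq_nonneg t),
        mul_nonneg (sub_nonneg.2 ht) (pow_nonneg ht0 4),
        mul_nonneg (sub_nonneg.2 ht) (pow_nonneg ht0 6),
        mul_nonneg (mul_nonneg (sub_nonneg.2 ht) (sub_nonneg.2 ht)) (pow_nonneg ht0 4)]
    _ ≤ 2 * t * exp (t ^ 2 / 2) := by gcongr

lemma exp_neg_sq_lt_two_mul_stdNormalTail {t : ℝ} (ht : 29 / 20 ≤ t) :
    exp (-t ^ 2) < 2 * stdNormalTail t := by
  have hratio : 1 < 2 * t * exp (t ^ 2 / 2) / (√(2 * π) * (1 + t ^ 2)) :=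
    (one_lt_div (by positivity)).2 (sqrt_two_mul_pi_mul_lt ht)
  have hsplit : exp (-t ^ 2 / 2) = exp (t ^ 2 / 2) * exp (-t ^ 2) := by rw [← exp_add]; ring_nf
  calc exp (-t ^ 2) < 2 * t * exp (t ^ 2 / 2) / (√(2 * π) * (1 + t ^ 2)) * exp (-t ^ 2) :=
        lt_mul_of_one_lt_left (exp_pos _) hratio
    _ = 2 * (t / (1 + t ^ 2) * stdNormalPDF t) := by
      rw [stdNormalPDF, hsplit]; field_simp
    _ ≤ 2 * stdNormalTail t := by gcongr; exact mul_stdNormalPDF_le_stdNormalTail t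

theorem quantile_squared_bounds_general (α p t : ℝ) (hα0 : 0 < α)
    (hpα : 8 < p / α) (ht : stdNormalCDF t = 1 - α / (2 * p)) :
    Real.log (p / α) < t ^ 2 ∧ t ^ 2 < 2 * Real.log (2 * p / α) := by
  have hp0 : 0 < p := (div_pos_iff_of_pos_right hα0).1 (by linarith)
  have htail : stdNormalTail t = α / (2 * p) := by linarith [stdNormalCDF_add_stdNormalTail t]
  have ht' : 29 / 20 ≤ t := by
    refine le_of_stdNormalTail_le ?_
    rw [htail, div_le_iff₀ (by positivity)]
    rw [lt_div_iff₀ hα0] at hpα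
    linarith
  constructor
  · have h := exp_neg_sq_lt_two_mul_stdNormalTail ht'
    rw [htail, exp_neg, show 2 * (α / (2 * p)) = (p / α)⁻¹ by field_simp] at h
    rw [log_lt_iff_lt_exp (by positivity)]
    exact (inv_lt_inv₀ (exp_pos _) (by positivity)).1 h
  · have h := stdNormalTail_lt_exp (by linarith : 1 ≤ t)
    rw [htail, neg_div, exp_neg, show α / (2 * p) = (2 * p / α)⁻¹ by field_simp] at h
    rw [← div_lt_iff₀' two_pos, lt_log_iff_exp_lt (by positivity)]
    exact (inv_lt_inv₀ (by positivity) (exp_pos _)).1 h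

/-- Let `α ∈ (0,1)` and `p ≥ 1` with `p/α > 8`, and let `t = Φ⁻¹(1 - α/(2p))` be the
`(1-α/(2p))`-quantile of the standard normal distribution. Then
`log(p/α) < t² < 2·log(2p/α)`. -/
theorem quantile_squared_bounds (α p t : ℝ) (hα0 : 0 < α) (hα1 : α < 1)
    (hp : 1 ≤ p) (hpα : 8 < p / α) (ht : stdNormalCDF t = 1 - α / (2 * p)) :
    Real.log (p / α) < t ^ 2 ∧ t ^ 2 < 2 * Real.log (2 * p / α) :=
  quantile_squared_bounds_general α p t hα0 hpα ht
end

section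
/- Let L: ℝ^p → ℝ be three times differentiable such that for all β, u, v ∈ ℝ^p, |∇³L(β)[u,v,v]| ≤ M·‖u‖₂·∇²L(β)[v,v] for some constant M > 0 (self-concordant-like with respect to the ℓ₂ norm restricted to direction u = δ with bound M‖δ‖₂). Then for δ = β̂ - β*, L(β̂) - L(β*) ≥ ⟨δ, ∇L(β*)⟩ + (⟨δ, ∇²L(β*)δ⟩/(M²‖δ‖₂²))·(exp(-M‖δ‖₂) + M‖δ‖₂ - 1). -/
/-! Restrict `L` to the segment: `g t = L (β* + t • δ)` has `|g'''| ≤ a g''` with `a = M ‖δ‖₂`.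
Gronwall's argument (`g'' t * exp (a t)` is nondecreasing) gives `g'' t ≥ g'' 0 * exp (-a t)`
for `t ≥ 0`, and integrating this lower bound twice over `[0, 1]` yields the claim. -/

open Real

theorem hasDerivAt_iteratedFDeriv_apply_const_add_smul
    {E F : Type*} [NormedAddCommGroup E] [NormedSpace ℝ E] [NormedAddCommGroup F] [NormedSpace ℝ F]
    {f : E → F} {N : WithTop ℕ∞} {n : ℕ} (hf : ContDiff ℝ N f) (hn : (n : WithTop ℕ∞) < N)
    (x v : E) (t : ℝ) :
    HasDerivAt (fun s : ℝ => iteratedFDeriv ℝ n f (x + s • v) fun _ => v)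
      (iteratedFDeriv ℝ (n + 1) f (x + t • v) fun _ => v) t := by
  have hline : HasDerivAt (fun s : ℝ => x + s • v) v t := by
    simpa using ((hasDerivAt_id t).smul_const v).const_add x
  have hD := (hf.differentiable_iteratedFDeriv hn (x + t • v)).hasFDerivAt.comp_hasDerivAt t hline
  exact (ContinuousMultilinearMap.apply ℝ (fun _ : Fin n => E) F fun _ => v).hasFDerivAt
    |>.comp_hasDerivAt t hD

theorem hasDerivAt_exp_mul (a t : ℝ) : HasDerivAt (fun s => exp (a * s)) (a * exp (a * t)) t := by
  simpa [mul_comm] using ((hasDerivAt_id t).const_mul a).exp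

theorem sub_le_sub_of_hasDerivAt_le {f g f' g' : ℝ → ℝ} (hf : ∀ t, HasDerivAt f (f' t) t)
    (hg : ∀ t, HasDerivAt g (g' t) t) (hle : ∀ t, 0 ≤ t → f' t ≤ g' t) {x : ℝ} (hx : 0 ≤ x) :
    f x - f 0 ≤ g x - g 0 := by
  have hmono : MonotoneOn (fun t => g t - f t) (Set.Ici 0) := by
    refine monotoneOn_of_hasDerivWithinAt_nonneg (convex_Ici 0)
      (fun t _ => ((hg t).sub (hf t)).continuousAt.continuousWithinAt)
      (fun t _ => ((hg t).sub (hf t)).hasDerivWithinAt) fun t ht => ?_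
    rw [interior_Ici] at ht
    exact sub_nonneg.mpr (hle t ht.le)
  have := hmono Set.self_mem_Ici hx hx
  linarith

theorem mul_exp_neg_le_of_hasDerivAt {h h' : ℝ → ℝ} {a : ℝ} (hh : ∀ t, HasDerivAt h (h' t) t)
    (hbound : ∀ t, -(a * h t) ≤ h' t) {t : ℝ} (ht : 0 ≤ t) : h 0 * exp (-a * t) ≤ h t := by
  have hmono : Monotone fun s => h s * exp (a * s) := by
    refine monotone_of_hasDerivAt_nonneg (f' := fun s => (h' s + a * h s) * exp (a * s))
      (fun s => ((hh s).mul (hasDerivAt_exp_mul a s)).congr_deriv (by ring)) fun s => ?_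
    have := hbound s
    have := exp_pos (a * s)
    simp only [Pi.zero_apply]
    nlinarith
  have := hmono ht
  simp only [mul_zero, exp_zero, mul_one] at this
  rw [neg_mul, exp_neg, ← div_eq_mul_inv, div_le_iff₀ (exp_pos _)]
  exact this

theorem add_div_sq_mul_exp_le_sub_of_hasDerivAt {g g' g'' g''' : ℝ → ℝ} {a : ℝ} (ha : a ≠ 0)
    (hg : ∀ t, HasDerivAt g (g' t) t) (hg' : ∀ t, HasDerivAt g' (g'' t) t)
    (hg'' : ∀ t, HasDerivAt g'' (g''' t) t) (hbound : ∀ t, -(a * g'' t) ≤ g''' t) :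
    g' 0 + g'' 0 / a ^ 2 * (exp (-a) + a - 1) ≤ g 1 - g 0 := by
  have slope_lower : ∀ t, 0 ≤ t → g' 0 + g'' 0 * (1 - exp (-a * t)) / a ≤ g' t := by
    intro t ht
    have hderiv : ∀ s, HasDerivAt (fun s => -(g'' 0 * exp (-a * s) / a))
        (g'' 0 * exp (-a * s)) s := fun s =>
      (((hasDerivAt_exp_mul (-a) s).const_mul (g'' 0)).div_const a).neg.congr_deriv
        (by field_simp)
    have := sub_le_sub_of_hasDerivAt_le hderiv hg'
      (fun s hs => mul_exp_neg_le_of_hasDerivAt hg'' hbound hs) ht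
    simp only [mul_zero, exp_zero] at this
    linear_combination this
  have hderiv : ∀ s, HasDerivAt (fun s => g' 0 * s + g'' 0 * (exp (-a * s) + a * s) / a ^ 2)
      (g' 0 + g'' 0 * (1 - exp (-a * s)) / a) s := fun s =>
    (((hasDerivAt_id s).const_mul (g' 0)).add ((((hasDerivAt_exp_mul (-a) s).add
      ((hasDerivAt_id s).const_mul a)).const_mul (g'' 0)).div_const (a ^ 2))).congr_deriv
      (by field_simp; ring)
  have := sub_le_sub_of_hasDerivAt_le hderiv hg slope_lower zero_le_one
  simp only [mul_one, mul_zero, exp_zero] at this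
  linear_combination this

/-- Self-concordant-like lower bound: if `L` is three times differentiable with
`|∇³L(β)[u,v,v]| ≤ M·‖u‖₂·∇²L(β)[v,v]` for all `β, u, v`, then for `δ = β̂ - β*`,
`L(β̂) - L(β*) ≥ ⟨δ, ∇L(β*)⟩ + (⟨δ, ∇²L(β*)δ⟩/(M²‖δ‖₂²))·(exp(-M‖δ‖₂) + M‖δ‖₂ - 1)`. -/
theorem self_concordant_lower_bound {p : ℕ} (L : (Fin p → ℝ) → ℝ) (M : ℝ) (hM : 0 < M)
    (hL : ContDiff ℝ 3 L)
    (hself : ∀ β u v : Fin p → ℝ,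
      |iteratedFDeriv ℝ 3 L β ![u, v, v]| ≤
        M * Real.sqrt (∑ j, (u j) ^ 2) * iteratedFDeriv ℝ 2 L β ![v, v])
    (βhat βstar : Fin p → ℝ) :
    L βhat - L βstar ≥
      fderiv ℝ L βstar (βhat - βstar) +
        (iteratedFDeriv ℝ 2 L βstar ![βhat - βstar, βhat - βstar] /
            (M ^ 2 * Real.sqrt (∑ j, (βhat j - βstar j) ^ 2) ^ 2)) *
          (Real.exp (-(M * Real.sqrt (∑ j, (βhat j - βstar j) ^ 2))) +
            M * Real.sqrt (∑ j, (βhat j - βstar j) ^ 2) - 1) := by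
  obtain rfl | hne := eq_or_ne βhat βstar
  · simp -- at `δ = 0` the quotient is a division by zero, so both sides vanish
  set s := Real.sqrt (∑ j, (βhat j - βstar j) ^ 2)
  have hs : s ≠ 0 := by
    obtain ⟨j, hj⟩ := Function.ne_iff.mp hne
    have := sub_ne_zero.mpr hj
    exact Real.sqrt_ne_zero'.mpr
      (Finset.sum_pos' (fun i _ => sq_nonneg _) ⟨j, Finset.mem_univ j, by positivity⟩)
  have hderiv n (hn : n < 3) t := hasDerivAt_iteratedFDeriv_apply_const_add_smul hL
    (by exact_mod_cast hn) βstar (βhat - βstar) t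
  have key := add_div_sq_mul_exp_le_sub_of_hasDerivAt (mul_ne_zero hM.ne' hs)
    (hderiv 0 (by norm_num)) (hderiv 1 (by norm_num)) (hderiv 2 (by norm_num)) fun t => by
      have := hself (βstar + t • (βhat - βstar)) (βhat - βstar) (βhat - βstar)
      simp only [Matrix.vec_single_eq_const, Matrix.vecCons_const, Pi.sub_apply] at this
      exact (abs_le.mp this).1
  simp only [Nat.reduceAdd, zero_smul, add_zero, one_smul, add_sub_cancel,
    iteratedFDeriv_zero_apply, iteratedFDeriv_one_apply] at key
  simp only [Matrix.vec_single_eq_const, Matrix.vecCons_const, ge_iff_le, ← mul_pow]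
  exact key
end

section
/- For the negative binomial log-likelihood L as above, with sup_{i,j}|x_{ij}| ≤ R, the third directional derivative satisfies |∇³L(β)[u,v,v]| ≤ R·‖u‖₁·∇²L(β)[v,v] for all β, u, v ∈ ℝ^p. -/
/-!
Each summand of `L` is a function `φᵢ` of the linear predictor `tᵢ = xᵢᵀβ`, so
`∇ᵏL(β)[m₁,…,mₖ] = ∑ᵢ φᵢ⁽ᵏ⁾(tᵢ) ∏ⱼ xᵢᵀmⱼ`. With `p = eᵗ/(r + eᵗ)` one has `p' = p(1 - p)`, whence
`φᵢ'' = (yᵢ + r) p(1 - p)/n ≥ 0` and `φᵢ''' = φᵢ''·(1 - 2p)`; since `0 ≤ p ≤ 1`, `|φᵢ'''| ≤ φᵢ''`.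
Bounding `|xᵢᵀu| ≤ R‖u‖₁` termwise then gives the claim.
-/

open Finset Real

noncomputable def negBinomialLogLik (y r t : ℝ) : ℝ :=
  y * (t - log (r + exp t)) - r * log (r + exp t)

/-- The success probability `μ / (r + μ)` of the negative binomial law with mean `μ = exp t` and
size `r`. -/
noncomputable def negBinomialProb (r t : ℝ) : ℝ := exp t / (r + exp t)

section NegBinomial

variable {y r : ℝ}

theorem add_exp_pos (hr : 0 ≤ r) (t : ℝ) : 0 < r + exp t := by positivity

theorem negBinomialProb_nonneg (hr : 0 ≤ r) (t : ℝ) : 0 ≤ negBinomialProb r t :=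
  div_nonneg (exp_pos t).le (add_exp_pos hr t).le

theorem negBinomialProb_le_one (hr : 0 ≤ r) (t : ℝ) : negBinomialProb r t ≤ 1 :=
  div_le_one_of_le₀ (le_add_of_nonneg_left hr) (add_exp_pos hr t).le

theorem contDiff_negBinomialLogLik (hr : 0 ≤ r) {k : WithTop ℕ∞} :
    ContDiff ℝ k (negBinomialLogLik y r) := by
  have hlog : ContDiff ℝ k fun t => log (r + exp t) :=
    (contDiff_const.add contDiff_exp).log fun t => (add_exp_pos hr t).ne'
  exact (contDiff_const.mul (contDiff_id.sub hlog)).sub (contDiff_const.mul hlog)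

theorem hasDerivAt_negBinomialProb (hr : 0 ≤ r) (t : ℝ) :
    HasDerivAt (negBinomialProb r) (negBinomialProb r t * (1 - negBinomialProb r t)) t := by
  have hpos := (add_exp_pos hr t).ne'
  refine ((hasDerivAt_exp t).fun_div ((hasDerivAt_exp t).const_add r) hpos).congr_deriv ?_
  unfold negBinomialProb
  field_simp

theorem hasDerivAt_negBinomialLogLik (hr : 0 ≤ r) (t : ℝ) :
    HasDerivAt (negBinomialLogLik y r) (y - (y + r) * negBinomialProb r t) t := by
  have hlog := ((hasDerivAt_exp t).const_add r).log (add_exp_pos hr t).ne'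
  refine (((hasDerivAt_id' t).sub hlog).const_mul y |>.sub (hlog.const_mul r)).congr_deriv ?_
  unfold negBinomialProb
  ring

theorem deriv_negBinomialLogLik (hr : 0 ≤ r) :
    deriv (negBinomialLogLik y r) = fun t => y - (y + r) * negBinomialProb r t :=
  funext fun t => (hasDerivAt_negBinomialLogLik hr t).deriv

theorem iteratedDeriv_two_negBinomialLogLik (hr : 0 ≤ r) :
    iteratedDeriv 2 (negBinomialLogLik y r) =
      fun t => -(y + r) * (negBinomialProb r t * (1 - negBinomialProb r t)) := by
  rw [iteratedDeriv_succ, iteratedDeriv_one, deriv_negBinomialLogLik hr]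
  funext t
  convert ((hasDerivAt_negBinomialProb hr t).const_mul (y + r)).const_sub y |>.deriv using 1
  ring

theorem iteratedDeriv_three_negBinomialLogLik (hr : 0 ≤ r) (t : ℝ) :
    iteratedDeriv 3 (negBinomialLogLik y r) t =
      iteratedDeriv 2 (negBinomialLogLik y r) t * (1 - 2 * negBinomialProb r t) := by
  rw [iteratedDeriv_succ, iteratedDeriv_two_negBinomialLogLik hr]
  have hp := hasDerivAt_negBinomialProb hr t
  rw [((hp.fun_mul (hp.const_sub 1)).const_mul (-(y + r))).deriv]
  ring

theorem abs_iteratedDeriv_three_negBinomialLogLik_le (hy : 0 ≤ y) (hr : 0 ≤ r) (t : ℝ) :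
    |iteratedDeriv 3 (negBinomialLogLik y r) t| ≤ -iteratedDeriv 2 (negBinomialLogLik y r) t := by
  have h₀ := negBinomialProb_nonneg hr t
  have h₁ := negBinomialProb_le_one hr t
  have h₂ : iteratedDeriv 2 (negBinomialLogLik y r) t ≤ 0 := by
    rw [iteratedDeriv_two_negBinomialLogLik hr]
    exact mul_nonpos_of_nonpos_of_nonneg (by linarith) (mul_nonneg h₀ (by linarith))
  rw [iteratedDeriv_three_negBinomialLogLik hr, abs_mul, abs_of_nonpos h₂]
  exact mul_le_of_le_one_right (by linarith) (abs_le.mpr ⟨by linarith, by linarith⟩)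

end NegBinomial

section LinearPredictor

variable {E : Type*} [NormedAddCommGroup E] [NormedSpace ℝ E]

theorem iteratedFDeriv_comp_clm_apply {φ : ℝ → ℝ} {k : ℕ} (hφ : ContDiff ℝ k φ)
    (ℓ : E →L[ℝ] ℝ) (b : E) (m : Fin k → E) :
    iteratedFDeriv ℝ k (fun b => φ (ℓ b)) b m = iteratedDeriv k φ (ℓ b) * ∏ j, ℓ (m j) := by
  rw [show (fun b => φ (ℓ b)) = φ ∘ ℓ from rfl, ℓ.iteratedFDeriv_comp_right hφ b le_rfl,
    ContinuousMultilinearMap.compContinuousLinearMap_apply,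
    iteratedFDeriv_apply_eq_iteratedDeriv_mul_prod, smul_eq_mul, mul_comm]

theorem iteratedFDeriv_sum_comp_clm_apply {ι : Type*} (s : Finset ι) {φ : ι → ℝ → ℝ} {k : ℕ}
    (hφ : ∀ i ∈ s, ContDiff ℝ k (φ i)) (ℓ : ι → E →L[ℝ] ℝ) (b : E) (m : Fin k → E) :
    iteratedFDeriv ℝ k (fun b => ∑ i ∈ s, φ i (ℓ i b)) b m =
      ∑ i ∈ s, iteratedDeriv k (φ i) (ℓ i b) * ∏ j, ℓ i (m j) := by
  rw [iteratedFDeriv_sum (f := fun i b => φ i (ℓ i b)) fun i hi => (hφ i hi).comp (ℓ i).contDiff,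
    Finset.sum_apply, _root_.sum_apply]
  exact Finset.sum_congr rfl fun i hi => iteratedFDeriv_comp_clm_apply (hφ i hi) (ℓ i) b m

theorem abs_iteratedFDeriv_three_sum_comp_clm_le {ι : Type*} (s : Finset ι) {φ : ι → ℝ → ℝ}
    (hφ : ∀ i ∈ s, ContDiff ℝ 3 (φ i))
    (hφ₃ : ∀ i ∈ s, ∀ t, |iteratedDeriv 3 (φ i) t| ≤ iteratedDeriv 2 (φ i) t)
    (ℓ : ι → E →L[ℝ] ℝ) {K : ℝ} (b u v : E) (hu : ∀ i ∈ s, |ℓ i u| ≤ K) :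
    |iteratedFDeriv ℝ 3 (fun b => ∑ i ∈ s, φ i (ℓ i b)) b ![u, v, v]| ≤
      K * iteratedFDeriv ℝ 2 (fun b => ∑ i ∈ s, φ i (ℓ i b)) b ![v, v] := by
  rw [iteratedFDeriv_sum_comp_clm_apply s hφ, iteratedFDeriv_sum_comp_clm_apply s
    fun i hi => (hφ i hi).of_le (by norm_num), Finset.mul_sum]
  refine (Finset.abs_sum_le_sum_abs _ _).trans (Finset.sum_le_sum fun i hi => ?_)
  simp only [Fin.prod_univ_succ, Fin.prod_univ_zero, Matrix.cons_val_zero, Matrix.cons_val_succ,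
    mul_one]
  have h₃ := hφ₃ i hi (ℓ i b)
  have h₂ : 0 ≤ iteratedDeriv 2 (φ i) (ℓ i b) := (abs_nonneg _).trans h₃
  calc |iteratedDeriv 3 (φ i) (ℓ i b) * (ℓ i u * (ℓ i v * ℓ i v))|
      = |iteratedDeriv 3 (φ i) (ℓ i b)| * |ℓ i u| * (ℓ i v * ℓ i v) := by
        rw [abs_mul, abs_mul, abs_mul_self, mul_assoc]
    _ ≤ iteratedDeriv 2 (φ i) (ℓ i b) * K * (ℓ i v * ℓ i v) := by
        gcongr
        · exact mul_self_nonneg _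
        · exact hu i hi
    _ = K * (iteratedDeriv 2 (φ i) (ℓ i b) * (ℓ i v * ℓ i v)) := by ring

end LinearPredictor

theorem abs_sum_mul_le_mul_sum_abs {ι : Type*} (s : Finset ι) {a b : ι → ℝ} {R : ℝ}
    (ha : ∀ j ∈ s, |a j| ≤ R) : |∑ j ∈ s, a j * b j| ≤ R * ∑ j ∈ s, |b j| := by
  rw [Finset.mul_sum]
  refine (Finset.abs_sum_le_sum_abs _ _).trans (Finset.sum_le_sum fun j hj => ?_)
  rw [abs_mul]
  exact mul_le_mul_of_nonneg_right (ha j hj) (abs_nonneg _)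

theorem negBinomial_loglik_third_deriv_bound_general {n p : ℕ}
    (x : Fin n → Fin p → ℝ) (y : Fin n → ℝ) (hy : ∀ i, 0 ≤ y i)
    (r R : ℝ) (hr : 0 < r) (hx : ∀ i j, |x i j| ≤ R)
    (L : (Fin p → ℝ) → ℝ)
    (hL : L = fun β : Fin p → ℝ => -(1 / (n : ℝ)) * ∑ i,
      (y i * ((∑ j, x i j * β j) - Real.log (r + Real.exp (∑ j, x i j * β j))) -
        r * Real.log (r + Real.exp (∑ j, x i j * β j)))) :
    ∀ (β u v : Fin p → ℝ),
      |iteratedFDeriv ℝ 3 L β ![u, v, v]| ≤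
        R * (∑ j, |u j|) * iteratedFDeriv ℝ 2 L β ![v, v] := by
  intro β u v
  let ℓ : Fin n → (Fin p → ℝ) →L[ℝ] ℝ := fun i => ∑ j, x i j • ContinuousLinearMap.proj j
  have hℓ : ∀ i b, ℓ i b = ∑ j, x i j * b j := fun i b => by simp [ℓ]
  have hL' : L = fun β => ∑ i, -(1 / (n : ℝ)) * negBinomialLogLik (y i) r (ℓ i β) := by
    simp only [hL, hℓ, negBinomialLogLik, Finset.mul_sum]
  have hc : -(1 / (n : ℝ)) ≤ 0 := neg_nonpos.mpr (by positivity)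
  rw [hL']
  refine abs_iteratedFDeriv_three_sum_comp_clm_le _
    (fun i _ => contDiff_const.mul (contDiff_negBinomialLogLik hr.le))
    (fun i _ t => ?_) ℓ β u v fun i _ => hℓ i u ▸ abs_sum_mul_le_mul_sum_abs _ fun j _ => hx i j
  have h := abs_iteratedDeriv_three_negBinomialLogLik_le (hy i) hr.le t
  rw [iteratedDeriv_const_mul_field, iteratedDeriv_const_mul_field, abs_mul, abs_of_nonpos hc]
  linarith [mul_le_mul_of_nonneg_left h (neg_nonneg.mpr hc)]

/-- For the negative binomial log-likelihood `L` with `sup_{i,j}|x_{ij}| ≤ R`, the third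
directional derivative satisfies `|∇³L(β)[u,v,v]| ≤ R·‖u‖₁·∇²L(β)[v,v]`
for all `β, u, v ∈ ℝ^p`. -/
theorem negBinomial_loglik_third_deriv_bound {n p : ℕ} (hn : 0 < n)
    (x : Fin n → Fin p → ℝ) (y : Fin n → ℝ) (hy : ∀ i, 0 ≤ y i)
    (r R : ℝ) (hr : 0 < r) (hx : ∀ i j, |x i j| ≤ R)
    (L : (Fin p → ℝ) → ℝ)
    (hL : L = fun β : Fin p → ℝ => -(1 / (n : ℝ)) * ∑ i,
      (y i * ((∑ j, x i j * β j) - Real.log (r + Real.exp (∑ j, x i j * β j))) -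
        r * Real.log (r + Real.exp (∑ j, x i j * β j)))) :
    ∀ (β u v : Fin p → ℝ),
      |iteratedFDeriv ℝ 3 L β ![u, v, v]| ≤
        R * (∑ j, |u j|) * iteratedFDeriv ℝ 2 L β ![v, v] :=
  negBinomial_loglik_third_deriv_bound_general x y hy r R hr hx L hL
end
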